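/- arXiv:2106.06779 — 5 statements merged into one kernel-verified Lean document; each statement's English description precedes it below -/
import Mathlib

section
/- Let X and Y be independent real-valued random variables on a probability space, each almost surely strictly positive, with probability density functions f and g respectively (each supported on [0,∞)). Then the ratio X / (X + Y) has probability density function p ↦ ∫₀^∞ z · f(z p) · g(z (1 − p)) dz on [0,1] with respect to Lebesgue measure. -/
/-!
By independence, `(X, Y)` has density `f x * g y`, which vanishes off the closed quadrant. The
substitution `(z, p) ↦ (z p, z (1 - p))`, inverse to `(x, y) ↦ (x + y, x / (x + y))` and with
Jacobian `z`, carries `(0, ∞) × (s ∩ (0, 1))` onto the part of the open quadrant where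
`x / (x + y) ∈ s`. Tonelli then exhibits the law of the ratio as having the lower integral
`∫⁻ z in (0, ∞), z f (z p) g (z (1 - p))` as density; it is finite almost everywhere because
the law has mass one, so it agrees with the Bochner integral.
-/

open MeasureTheory ProbabilityTheory Set Filter
open scoped ENNReal

noncomputable section

def splitMap (q : ℝ × ℝ) : ℝ × ℝ := (q.1 * q.2, q.1 * (1 - q.2))

def splitMapDeriv (q : ℝ × ℝ) : ℝ × ℝ →L[ℝ] ℝ × ℝ :=
  LinearMap.toContinuousLinearMap <| Matrix.toLin (Module.Basis.finTwoProd ℝ)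
    (Module.Basis.finTwoProd ℝ) !![q.2, q.1; 1 - q.2, -q.1]

theorem hasFDerivAt_splitMap (q : ℝ × ℝ) : HasFDerivAt splitMap (splitMapDeriv q) q := by
  have h₁ := (hasFDerivAt_fst (𝕜 := ℝ) (p := q)).mul (hasFDerivAt_snd (𝕜 := ℝ) (p := q))
  have h₂ := (hasFDerivAt_fst (𝕜 := ℝ) (p := q)).mul
    ((hasFDerivAt_snd (𝕜 := ℝ) (p := q)).const_sub 1)
  refine (h₁.prodMk h₂).congr_fderiv ?_
  rw [splitMapDeriv, Matrix.toLin_finTwoProd_toContinuousLinearMap]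
  ext <;> simp

theorem det_splitMapDeriv (q : ℝ × ℝ) : (splitMapDeriv q).det = -q.1 := by
  simp [splitMapDeriv, LinearMap.det_toContinuousLinearMap, LinearMap.det_toLin,
    Matrix.det_fin_two_of]
  ring

theorem injOn_splitMap : InjOn splitMap (Ioi 0 ×ˢ univ) := by
  rintro ⟨z₁, p₁⟩ ⟨hz₁, -⟩ ⟨z₂, p₂⟩ - h
  simp only [splitMap, Prod.mk.injEq] at h
  have hz : z₁ = z₂ := by linear_combination h.1 + h.2
  subst hz
  exact Prod.ext rfl (mul_left_cancel₀ (ne_of_gt hz₁) h.1)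

theorem splitMap_image (s : Set ℝ) :
    splitMap '' (Ioi 0 ×ˢ (Ioo 0 1 ∩ s)) =
      (fun q : ℝ × ℝ => q.1 / (q.1 + q.2)) ⁻¹' s ∩ Ioi 0 ×ˢ Ioi 0 := by
  ext ⟨x, y⟩
  constructor
  · rintro ⟨⟨z, p⟩, ⟨hz, ⟨hp₀, hp₁⟩, hps⟩, h⟩
    simp only [splitMap, Prod.mk.injEq] at h
    obtain ⟨rfl, rfl⟩ := h
    have hz : 0 < z := hz
    have hratio : z * p / (z * p + z * (1 - p)) = p := by field_simp; ring
    exact ⟨by simpa [hratio], mul_pos hz hp₀, mul_pos hz (sub_pos.2 hp₁)⟩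
  · rintro ⟨hs, hx, hy⟩
    have hx : 0 < x := hx
    have hy : 0 < y := hy
    refine ⟨(x + y, x / (x + y)), ⟨add_pos hx hy, ⟨by positivity, ?_⟩, hs⟩, ?_⟩
    · rw [div_lt_one (by positivity)]; linarith
    · have : x + y ≠ 0 := by positivity
      simp only [splitMap, Prod.mk.injEq]
      constructor <;> field_simp
      ring

def ratioIntegrand (f g : ℝ → ℝ) (p z : ℝ) : ℝ := z * f (z * p) * g (z * (1 - p))

def ratioDensity (f g : ℝ → ℝ) (p : ℝ) : ℝ≥0∞ :=
  ∫⁻ z in Ioi 0, ENNReal.ofReal (ratioIntegrand f g p z)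

section

variable {f g : ℝ → ℝ}

theorem measurable_ratioIntegrand (hf : Measurable f) (hg : Measurable g) :
    Measurable (Function.uncurry (ratioIntegrand f g)) := by
  unfold ratioIntegrand
  fun_prop

theorem measurable_ratioDensity (hf : Measurable f) (hg : Measurable g) :
    Measurable (ratioDensity f g) :=
  (measurable_ratioIntegrand hf hg).ennreal_ofReal.lintegral_prod_right'

theorem ratioIntegrand_nonneg (hf₀ : ∀ x, 0 ≤ f x) (hg₀ : ∀ x, 0 ≤ g x) (p : ℝ) {z : ℝ}
    (hz : 0 ≤ z) : 0 ≤ ratioIntegrand f g p z :=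
  mul_nonneg (mul_nonneg hz (hf₀ _)) (hg₀ _)

theorem ratioIntegrand_eq_zero (hfzero : ∀ x < 0, f x = 0) (hgzero : ∀ x < 0, g x = 0)
    {p z : ℝ} (hp : p ∉ Icc 0 1) (hz : 0 < z) : ratioIntegrand f g p z = 0 := by
  rcases not_and_or.1 hp with hp | hp
  · simp [ratioIntegrand, hfzero _ (mul_neg_of_pos_of_neg hz (not_le.1 hp))]
  · simp [ratioIntegrand, hgzero _ (mul_neg_of_pos_of_neg hz (sub_neg.2 (not_le.1 hp)))]

theorem ratioDensity_eq_zero (hfzero : ∀ x < 0, f x = 0) (hgzero : ∀ x < 0, g x = 0) {p : ℝ}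
    (hp : p ∉ Icc 0 1) : ratioDensity f g p = 0 := by
  rw [ratioDensity, setLIntegral_congr_fun measurableSet_Ioi
    (fun z hz => by rw [ratioIntegrand_eq_zero hfzero hgzero hp hz])]
  simp

theorem ofReal_setIntegral_ratioIntegrand (hf : Measurable f) (hg : Measurable g)
    (hf₀ : ∀ x, 0 ≤ f x) (hg₀ : ∀ x, 0 ≤ g x) {p : ℝ} (hp : ratioDensity f g p ≠ ∞) :
    ENNReal.ofReal (∫ z in Ioi 0, ratioIntegrand f g p z) = ratioDensity f g p := by
  have hnonneg : 0 ≤ᵐ[volume.restrict (Ioi 0)] ratioIntegrand f g p :=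
    (ae_restrict_iff' measurableSet_Ioi).2 <| .of_forall fun z hz =>
      ratioIntegrand_nonneg hf₀ hg₀ p (le_of_lt hz)
  have hmeas : Measurable (ratioIntegrand f g p) :=
    (measurable_ratioIntegrand hf hg).comp measurable_prodMk_left
  rw [integral_eq_lintegral_of_nonneg_ae hnonneg hmeas.aestronglyMeasurable]
  exact ENNReal.ofReal_toReal hp

theorem setLIntegral_Ioo_inter_ratioDensity (hfzero : ∀ x < 0, f x = 0)
    (hgzero : ∀ x < 0, g x = 0) (s : Set ℝ) :
    ∫⁻ p in Ioo 0 1 ∩ s, ratioDensity f g p = ∫⁻ p in s, ratioDensity f g p := by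
  have hsupp : (Icc 0 1).indicator (ratioDensity f g) = ratioDensity f g :=
    indicator_eq_self.2 fun _ hp =>
      by_contra fun h => hp (ratioDensity_eq_zero hfzero hgzero h)
  rw [setLIntegral_congr (Ioo_ae_eq_Icc.inter (EventuallyEq.refl _ s)),
    ← Measure.restrict_restrict measurableSet_Icc, ← lintegral_indicator measurableSet_Icc,
    hsupp]

theorem prod_density_eq_indicator (hfzero : ∀ x < 0, f x = 0) (hgzero : ∀ x < 0, g x = 0) :
    (fun q : ℝ × ℝ => ENNReal.ofReal (f q.1) * ENNReal.ofReal (g q.2)) =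
      (Ici 0 ×ˢ Ici 0).indicator fun q => ENNReal.ofReal (f q.1) * ENNReal.ofReal (g q.2) := by
  refine (indicator_eq_self.2 fun q hq => ?_).symm
  by_contra hout
  rcases not_and_or.1 hout with h | h
  · exact hq (by simp [hfzero _ (not_le.1 h)])
  · exact hq (by simp [hgzero _ (not_le.1 h)])

theorem setLIntegral_preimage_ratio (hf : Measurable f) (hg : Measurable g)
    (hf₀ : ∀ x, 0 ≤ f x) (hfzero : ∀ x < 0, f x = 0) (hgzero : ∀ x < 0, g x = 0)
    {s : Set ℝ} (hs : MeasurableSet s) :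
    ∫⁻ q in (fun q : ℝ × ℝ => q.1 / (q.1 + q.2)) ⁻¹' s,
        ENNReal.ofReal (f q.1) * ENNReal.ofReal (g q.2) =
      ∫⁻ p in s, ratioDensity f g p := by
  set F := fun q : ℝ × ℝ => ENNReal.ofReal (f q.1) * ENNReal.ofReal (g q.2) with hF
  set T := fun q : ℝ × ℝ => q.1 / (q.1 + q.2)
  have hS : MeasurableSet (Ioi (0 : ℝ) ×ˢ (Ioo 0 1 ∩ s)) :=
    measurableSet_Ioi.prod (measurableSet_Ioo.inter hs)
  have hquadrant : (Ici 0 ×ˢ Ici 0 : Set (ℝ × ℝ)) =ᵐ[volume] Ioi 0 ×ˢ Ioi 0 := by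
    rw [Measure.volume_eq_prod]
    exact Measure.set_prod_ae_eq Ioi_ae_eq_Ici.symm Ioi_ae_eq_Ici.symm
  have hjac : ∀ q ∈ Ioi (0 : ℝ) ×ˢ (Ioo 0 1 ∩ s),
      ENNReal.ofReal |(splitMapDeriv q).det| * F (splitMap q) =
        ENNReal.ofReal (ratioIntegrand f g q.2 q.1) := by
    rintro ⟨z, p⟩ ⟨hz, -⟩
    have hz : 0 < z := hz
    rw [det_splitMapDeriv, abs_neg, abs_of_pos hz, ratioIntegrand,
      ENNReal.ofReal_mul (mul_nonneg hz.le (hf₀ _)), ENNReal.ofReal_mul hz.le, mul_assoc]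
    rfl
  calc ∫⁻ q in T ⁻¹' s, F q
      = ∫⁻ q in T ⁻¹' s ∩ Ioi 0 ×ˢ Ioi 0, F q := by
        conv_lhs => rw [hF, prod_density_eq_indicator hfzero hgzero]
        have hQ : MeasurableSet (Ici (0 : ℝ) ×ˢ Ici (0 : ℝ)) :=
          measurableSet_Ici.prod measurableSet_Ici
        rw [lintegral_indicator hQ, Measure.restrict_restrict hQ, inter_comm,
          setLIntegral_congr ((EventuallyEq.refl _ (T ⁻¹' s)).inter hquadrant)]
    _ = ∫⁻ q in splitMap '' (Ioi 0 ×ˢ (Ioo 0 1 ∩ s)), F q := by rw [splitMap_image]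
    _ = ∫⁻ q in Ioi 0 ×ˢ (Ioo 0 1 ∩ s), ENNReal.ofReal (ratioIntegrand f g q.2 q.1) := by
        rw [lintegral_image_eq_lintegral_abs_det_fderiv_mul volume hS
          (fun q _ => (hasFDerivAt_splitMap q).hasFDerivWithinAt)
          (injOn_splitMap.mono (prod_mono_right (subset_univ _))),
          setLIntegral_congr_fun hS hjac]
    _ = ∫⁻ p in Ioo 0 1 ∩ s, ratioDensity f g p := by
        rw [Measure.volume_eq_prod, ← Measure.prod_restrict,
          lintegral_prod_symm' (fun q => ENNReal.ofReal (ratioIntegrand f g q.2 q.1))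
            ((measurable_ratioIntegrand hf hg).comp measurable_swap).ennreal_ofReal]
        rfl
    _ = ∫⁻ p in s, ratioDensity f g p := setLIntegral_Ioo_inter_ratioDensity hfzero hgzero s

theorem map_ratio_withDensity_prod (hf : Measurable f) (hg : Measurable g) (hf₀ : ∀ x, 0 ≤ f x)
    (hfzero : ∀ x < 0, f x = 0) (hgzero : ∀ x < 0, g x = 0) :
    ((volume : Measure (ℝ × ℝ)).withDensity
        fun q => ENNReal.ofReal (f q.1) * ENNReal.ofReal (g q.2)).map
        (fun q => q.1 / (q.1 + q.2)) =
      volume.withDensity (ratioDensity f g) := by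
  ext s hs
  have hT : Measurable fun q : ℝ × ℝ => q.1 / (q.1 + q.2) := by fun_prop
  rw [Measure.map_apply hT hs, withDensity_apply _ (hT hs), withDensity_apply _ hs,
    setLIntegral_preimage_ratio hf hg hf₀ hfzero hgzero hs]

end

end

theorem density_ratio_general
    {Ω : Type*} [MeasurableSpace Ω] (P : Measure Ω) [IsProbabilityMeasure P]
    (X Y : Ω → ℝ) (hX : Measurable X) (hY : Measurable Y)
    (hindep : IndepFun X Y P)
    (f g : ℝ → ℝ) (hf : Measurable f) (hg : Measurable g)
    (hfnonneg : ∀ x, 0 ≤ f x) (hgnonneg : ∀ x, 0 ≤ g x)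
    (hfzero : ∀ x < 0, f x = 0) (hgzero : ∀ x < 0, g x = 0)
    (hXpdf : P.map X = volume.withDensity (fun x => ENNReal.ofReal (f x)))
    (hYpdf : P.map Y = volume.withDensity (fun x => ENNReal.ofReal (g x))) :
    P.map (fun ω => X ω / (X ω + Y ω)) =
      volume.withDensity (fun p => ENNReal.ofReal
        (∫ z in Set.Ioi (0 : ℝ), z * f (z * p) * g (z * (1 - p)))) := by
  have hjoint : P.map (fun ω => (X ω, Y ω)) =
      volume.withDensity fun q => ENNReal.ofReal (f q.1) * ENNReal.ofReal (g q.2) := by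
    rw [(indepFun_iff_map_prod_eq_prod_map_map hX.aemeasurable hY.aemeasurable).1 hindep,
      hXpdf, hYpdf, prod_withDensity hf.ennreal_ofReal hg.ennreal_ofReal, Measure.volume_eq_prod]
  have hlaw : P.map (fun ω => X ω / (X ω + Y ω)) = volume.withDensity (ratioDensity f g) := by
    rw [← map_ratio_withDensity_prod hf hg hfnonneg hfzero hgzero, ← hjoint,
      Measure.map_map (by fun_prop) (hX.prodMk hY)]
    rfl
  -- the Bochner integral of the statement is `0` wherever this lower integral is infinite
  have hfinite : ∀ᵐ p, ratioDensity f g p ≠ ∞ := by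
    have hmass : ∫⁻ p, ratioDensity f g p ≠ ∞ := by
      rw [← setLIntegral_univ, ← withDensity_apply _ MeasurableSet.univ, ← hlaw]
      exact measure_ne_top _ _
    filter_upwards [ae_lt_top (measurable_ratioDensity hf hg) hmass] with p hp using hp.ne
  rw [hlaw]
  refine withDensity_congr_ae ?_
  filter_upwards [hfinite] with p hp
  exact (ofReal_setIntegral_ratioIntegrand hf hg hfnonneg hgnonneg hp).symm

/-- for independent a.s. positive `X`, `Y` with densities `f`, `g` supported
on `[0,∞)`, the ratio `X / (X + Y)` has density `p ↦ ∫₀^∞ z f(z p) g(z (1 - p)) dz`. -/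
theorem density_ratio
    {Ω : Type*} [MeasurableSpace Ω] (P : Measure Ω) [IsProbabilityMeasure P]
    (X Y : Ω → ℝ) (hX : Measurable X) (hY : Measurable Y)
    (hindep : IndepFun X Y P)
    (hXpos : ∀ᵐ ω ∂P, 0 < X ω) (hYpos : ∀ᵐ ω ∂P, 0 < Y ω)
    (f g : ℝ → ℝ) (hf : Measurable f) (hg : Measurable g)
    (hfnonneg : ∀ x, 0 ≤ f x) (hgnonneg : ∀ x, 0 ≤ g x)
    (hfzero : ∀ x < 0, f x = 0) (hgzero : ∀ x < 0, g x = 0)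
    (hXpdf : P.map X = volume.withDensity (fun x => ENNReal.ofReal (f x)))
    (hYpdf : P.map Y = volume.withDensity (fun x => ENNReal.ofReal (g x))) :
    P.map (fun ω => X ω / (X ω + Y ω)) =
      volume.withDensity (fun p => ENNReal.ofReal
        (∫ z in Set.Ioi (0 : ℝ), z * f (z * p) * g (z * (1 - p)))) :=
  density_ratio_general P X Y hX hY hindep f g hf hg hfnonneg hgnonneg hfzero hgzero hXpdf hYpdf
end

section
/- Let n ≥ 2, λ > 0, and α₁, …, αₙ > 0 with α = α₁ + ⋯ + αₙ. For every (p₁, …, p_{n−1}) with each pᵢ > 0 and p₁ + ⋯ + p_{n−1} < 1, setting p_n = 1 − (p₁ + ⋯ + p_{n−1}), the integral identity ∫₀^∞ z^{n−1} ∏_{i=1}^{n} γ_{α_i,λ}(z p_i) dz = Γ(α) ∏_{i=1}^{n} (p_i^{α_i−1} / Γ(α_i)) holds; the right-hand side is the density of the Dirichlet distribution D(α₁, …, αₙ). -/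
/-!
For `z > 0` and weights `qᵢ ≥ 0` with `Σ qᵢ = 1`, the product `∏ᵢ γ_{αᵢ,λ}(z qᵢ)` factors as
`λ^α ∏ᵢ (qᵢ^{αᵢ-1} / Γ(αᵢ))` times `z^{α-n} e^{-λz}`, because the exponents `-λ z qᵢ` add up
to `-λ z`. After multiplying by `z^{n-1}` the integrand is a constant times an unnormalised
gamma density of shape `α`, whose integral `Γ(α) / λ^α` cancels the factor `λ^α`.
-/

open MeasureTheory Real

/-- The gamma density with shape `α > 0` and rate `λ > 0`:
`γ_{α,λ}(x) = (λ^α / Γ(α)) x^{α-1} e^{-λ x}` for `x ≥ 0`, and `0` for `x < 0`. -/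
noncomputable def gammaDensity (α lam : ℝ) (x : ℝ) : ℝ :=
  if x < 0 then 0 else lam ^ α / Real.Gamma α * x ^ (α - 1) * Real.exp (-lam * x)

open Finset

theorem gammaDensity_of_nonneg {α lam x : ℝ} (hx : 0 ≤ x) :
    gammaDensity α lam x = lam ^ α / Gamma α * x ^ (α - 1) * exp (-lam * x) :=
  if_neg hx.not_gt

section GammaProduct

variable {ι : Type*} [Fintype ι] {lam : ℝ} {α q : ι → ℝ}

theorem prod_gammaDensity_mul (hlam : 0 < lam) {z : ℝ} (hz : 0 < z) (hq : ∀ i, 0 ≤ q i)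
    (hqsum : ∑ i, q i = 1) :
    ∏ i, gammaDensity (α i) lam (z * q i) =
      lam ^ (∑ i, α i) * (∏ i, q i ^ (α i - 1) / Gamma (α i)) *
        (z ^ (∑ i, α i - Fintype.card ι) * exp (-(lam * z))) := by
  have hfactor : ∀ i, gammaDensity (α i) lam (z * q i) =
      lam ^ α i * (q i ^ (α i - 1) / Gamma (α i)) *
        (z ^ (α i - 1) * exp (q i * -(lam * z))) := fun i => by
    rw [gammaDensity_of_nonneg (mul_nonneg hz.le (hq i)), mul_rpow hz.le (hq i)]
    ring_nf
  have hexp : ∑ i, q i * -(lam * z) = -(lam * z) := by rw [← sum_mul, hqsum, one_mul]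
  have hpow : ∑ i, (α i - 1) = ∑ i, α i - Fintype.card ι := by simp [sum_sub_distrib]
  simp only [hfactor, prod_mul_distrib, ← rpow_sum_of_pos hz, ← rpow_sum_of_pos hlam, ← exp_sum,
    hexp, hpow]

theorem integral_pow_mul_prod_gammaDensity (hlam : 0 < lam) (hα : 0 < ∑ i, α i)
    (hq : ∀ i, 0 ≤ q i) (hqsum : ∑ i, q i = 1) :
    ∫ z in Set.Ioi (0 : ℝ), z ^ (Fintype.card ι - 1) * ∏ i, gammaDensity (α i) lam (z * q i) =
      Gamma (∑ i, α i) * ∏ i, q i ^ (α i - 1) / Gamma (α i) := by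
  set A := ∑ i, α i
  set P := ∏ i, q i ^ (α i - 1) / Gamma (α i)
  have hcard : 1 ≤ Fintype.card ι := Fintype.card_pos_iff.mpr <|
    univ_nonempty_iff.mp (nonempty_of_sum_ne_zero (f := q) (by simp [hqsum]))
  have hintegrand : ∀ z ∈ Set.Ioi (0 : ℝ),
      z ^ (Fintype.card ι - 1) * ∏ i, gammaDensity (α i) lam (z * q i) =
        lam ^ A * P * (z ^ (A - 1) * exp (-(lam * z))) := fun z (hz : 0 < z) => by
    have hzpow : z ^ (Fintype.card ι - 1) * z ^ (A - Fintype.card ι) = z ^ (A - 1) := by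
      rw [← rpow_natCast, ← rpow_add hz, Nat.cast_sub hcard]
      ring_nf
    rw [prod_gammaDensity_mul hlam hz hq hqsum, ← hzpow]
    ring
  have hcancel : lam ^ A * (1 / lam) ^ A = 1 := by
    rw [← mul_rpow hlam.le (by positivity), mul_one_div_cancel hlam.ne', one_rpow]
  rw [setIntegral_congr_fun measurableSet_Ioi hintegrand, integral_const_mul,
    integral_rpow_mul_exp_neg_mul_Ioi hα hlam]
  linear_combination Gamma A * P * hcancel

end GammaProduct

section SimplexCompletion

variable {n : ℕ}

noncomputable def simplexCompletion (p : Fin (n - 1) → ℝ) (i : Fin n) : ℝ :=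
  if h : (i : ℕ) < n - 1 then p ⟨i, h⟩ else 1 - ∑ j, p j

theorem simplexCompletion_pos {p : Fin (n - 1) → ℝ} (hp : ∀ i, 0 < p i) (hpsum : ∑ i, p i < 1)
    (i : Fin n) : 0 < simplexCompletion p i := by
  unfold simplexCompletion
  split
  · exact hp _
  · linarith

theorem sum_simplexCompletion (hn : 1 ≤ n) (p : Fin (n - 1) → ℝ) :
    ∑ i, simplexCompletion p i = 1 := by
  obtain ⟨m, rfl⟩ : ∃ m, n = m + 1 := ⟨n - 1, by omega⟩
  have hinit : ∀ j : Fin m, simplexCompletion p j.castSucc = p j := fun j => dif_pos (by simp)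
  have hlast : simplexCompletion p (Fin.last m) = 1 - ∑ j, p j := dif_neg (by simp)
  rw [Fin.sum_univ_castSucc, hlast]
  simp only [hinit]
  exact add_sub_cancel _ (1 : ℝ)

end SimplexCompletion

/-- with gamma conditioning densities of common rate `λ`,
`∫₀^∞ z^{n-1} ∏ᵢ γ_{αᵢ,λ}(z pᵢ) dz = Γ(α) ∏ᵢ pᵢ^{αᵢ-1} / Γ(αᵢ)`, the Dirichlet density,
where `pₙ = 1 - (p₁ + ⋯ + p_{n-1})` and `α = Σᵢ αᵢ`. -/
theorem gammaDensity_integral_eq_dirichletDensity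
    (n : ℕ) (hn : 2 ≤ n) (lam : ℝ) (hlam : 0 < lam)
    (α : Fin n → ℝ) (hα : ∀ i, 0 < α i)
    (p : Fin (n - 1) → ℝ) (hp : ∀ i, 0 < p i) (hpsum : ∑ i, p i < 1) :
    ∫ z in Set.Ioi (0 : ℝ), z ^ (n - 1) *
        ∏ i : Fin n, gammaDensity (α i) lam
          (z * (if h : (i : ℕ) < n - 1 then p ⟨i, h⟩ else 1 - ∑ j, p j)) =
      Real.Gamma (∑ i, α i) *
        ∏ i : Fin n, ((if h : (i : ℕ) < n - 1 then p ⟨i, h⟩ else 1 - ∑ j, p j) ^ (α i - 1) /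
          Real.Gamma (α i)) := by
  have hαsum : 0 < ∑ i, α i := sum_pos (fun i _ => hα i) ⟨⟨0, by omega⟩, mem_univ _⟩
  have h := integral_pow_mul_prod_gammaDensity hlam hαsum
    (fun i => (simplexCompletion_pos hp hpsum i).le) (sum_simplexCompletion (by omega) p)
  rwa [Fintype.card_fin] at h
end

section
/- For every α > 0 and s ≥ 0, the Laplace transform of the Lévy density f_α is ∫₀^∞ e^{−s x} f_α(x) dx = exp(−α √s). -/
/-!
Substituting `x = α² / (4 u²)` turns the transform into `(2 / √π) ∫₀^∞ exp (-(u² + b² / u²)) du`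
with `b = α √s / 2`. Since `u² + b² / u² = (u - b / u)² + 2 b`, it remains to see that
`∫₀^∞ exp (-(u - b / u)²) du = √π / 2`. The Cauchy–Schlömilch substitution `t = u - b / u`
maps `(0, ∞)` onto `ℝ` with weight `1 + b / u²`, and the involution `u ↦ b / u` shows that the
two parts of the weight contribute equally, so this integral is half the Gaussian integral.
-/

open MeasureTheory Real

/-- The Lévy density with scale parameter `α > 0`:
`f_α(x) = (α / (2 √(π x³))) e^{-α²/(4x)}` for `x > 0`, and `0` for `x ≤ 0`. -/
noncomputable def levyDensity (α : ℝ) (x : ℝ) : ℝ :=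
  if 0 < x then α / (2 * Real.sqrt (Real.pi * x ^ 3)) * Real.exp (-α ^ 2 / (4 * x)) else 0

open Set

section ChangeOfVariables

variable {E : Type*} [NormedAddCommGroup E] [NormedSpace ℝ E] {b : ℝ}

theorem hasDerivAt_div_pow {c u : ℝ} {n : ℕ} (hn : n ≠ 0) (hu : u ≠ 0) :
    HasDerivAt (fun u => c / u ^ n) (-(n * c / u ^ (n + 1))) u := by
  refine ((hasDerivAt_const u c).div (hasDerivAt_pow n u) (pow_ne_zero n hu)).congr_deriv ?_
  obtain ⟨m, rfl⟩ : ∃ m, n = m + 1 := ⟨n - 1, by omega⟩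
  rw [Nat.add_sub_cancel]
  field_simp
  ring

theorem strictAntiOn_div_pow {c : ℝ} (hc : 0 < c) {n : ℕ} (hn : n ≠ 0) :
    StrictAntiOn (fun u : ℝ => c / u ^ n) (Ioi 0) := fun _ hu _ _ huv =>
  div_lt_div_of_pos_left hc (pow_pos hu n) (pow_lt_pow_left₀ huv hu.le hn)

theorem image_div_pow_Ioi {c : ℝ} (hc : 0 < c) {n : ℕ} (hn : n ≠ 0) :
    (fun u : ℝ => c / u ^ n) '' Ioi 0 = Ioi 0 := by
  refine Subset.antisymm ?_ fun x (hx : 0 < x) => ?_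
  · rintro _ ⟨u, hu, rfl⟩
    exact div_pos hc (pow_pos hu n)
  · refine ⟨(c / x) ^ (n⁻¹ : ℝ), rpow_pos_of_pos (div_pos hc hx) _, ?_⟩
    simp only [rpow_inv_natCast_pow (div_pos hc hx).le hn, div_div_cancel₀ hc.ne']

theorem integral_Ioi_comp_div_pow {c : ℝ} (hc : 0 < c) {n : ℕ} (hn : n ≠ 0) (g : ℝ → E) :
    ∫ u in Ioi 0, (n * c / u ^ (n + 1)) • g (c / u ^ n) = ∫ x in Ioi 0, g x := by
  conv_rhs => rw [← image_div_pow_Ioi hc hn]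
  rw [integral_image_eq_integral_abs_deriv_smul measurableSet_Ioi
    (fun u hu => (hasDerivAt_div_pow hn (ne_of_gt hu)).hasDerivWithinAt)
    (strictAntiOn_div_pow hc hn).injOn]
  refine setIntegral_congr_fun measurableSet_Ioi fun u (hu : 0 < u) => ?_
  rw [abs_neg, abs_of_pos (by positivity)]

theorem hasDerivAt_sub_div {u : ℝ} (hu : u ≠ 0) :
    HasDerivAt (fun u => u - b / u) (1 + b / u ^ 2) u := by
  refine ((hasDerivAt_id u).sub ((hasDerivAt_const u b).div (hasDerivAt_id u) hu)).congr_deriv ?_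
  simp only [id]
  field_simp
  ring

theorem strictMonoOn_sub_div (hb : 0 ≤ b) : StrictMonoOn (fun u : ℝ => u - b / u) (Ioi 0) :=
  fun _ hu _ _ huv => by linarith [div_le_div_of_nonneg_left hb hu huv.le]

/-- The preimage of `t` is the positive root of `u ^ 2 - t u - b`. -/
theorem image_sub_div_Ioi (hb : 0 < b) : (fun u : ℝ => u - b / u) '' Ioi 0 = univ := by
  refine eq_univ_of_forall fun t => ?_
  have hroot : |t| < √(t ^ 2 + 4 * b) := by
    rw [← sqrt_sq_eq_abs]
    exact sqrt_lt_sqrt (sq_nonneg t) (by linarith)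
  have hsq : √(t ^ 2 + 4 * b) ^ 2 = t ^ 2 + 4 * b := sq_sqrt (by positivity)
  have hu : 0 < t + √(t ^ 2 + 4 * b) := by linarith [neg_abs_le t]
  refine ⟨_, half_pos hu, ?_⟩
  have := hu.ne'
  field_simp
  linear_combination hsq

theorem one_add_div_sq_pos (hb : 0 ≤ b) (u : ℝ) : 0 < 1 + b / u ^ 2 := by positivity

theorem integral_Ioi_comp_sub_div (hb : 0 < b) (g : ℝ → E) :
    ∫ u in Ioi 0, (1 + b / u ^ 2) • g (u - b / u) = ∫ t, g t := by
  conv_rhs => rw [← setIntegral_univ, ← image_sub_div_Ioi hb]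
  rw [integral_image_eq_integral_abs_deriv_smul
    measurableSet_Ioi (fun u hu => (hasDerivAt_sub_div (ne_of_gt hu)).hasDerivWithinAt)
    (strictMonoOn_sub_div hb.le).injOn]
  simp only [abs_of_pos (one_add_div_sq_pos hb.le _)]

theorem integrableOn_Ioi_comp_sub_div_iff (hb : 0 < b) (g : ℝ → E) :
    IntegrableOn (fun u => (1 + b / u ^ 2) • g (u - b / u)) (Ioi 0) ↔ Integrable g := by
  conv_rhs => rw [← integrableOn_univ, ← image_sub_div_Ioi hb]
  rw [integrableOn_image_iff_integrableOn_abs_deriv_smul measurableSet_Ioi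
      (fun u hu => (hasDerivAt_sub_div (ne_of_gt hu)).hasDerivWithinAt)
      (strictMonoOn_sub_div hb.le).injOn]
  simp only [abs_of_pos (one_add_div_sq_pos hb.le _)]

theorem integral_Ioi_comp_sub_div_of_even (hb : 0 < b) {g : ℝ → E} (hg : Integrable g)
    (heven : ∀ t, g (-t) = g t) :
    ∫ u in Ioi 0, g (u - b / u) = (2 : ℝ)⁻¹ • ∫ t, g t := by
  have hweighted := (integrableOn_Ioi_comp_sub_div_iff hb g).mpr hg
  have hplain : IntegrableOn (fun u => g (u - b / u)) (Ioi 0) := by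
    have h := hweighted.bdd_smul 1 (φ := fun u => (1 + b / u ^ 2)⁻¹)
      (Measurable.aestronglyMeasurable (by fun_prop)) <| ae_of_all _ fun u => by
        rw [norm_inv, norm_of_nonneg (one_add_div_sq_pos hb.le u).le]
        exact inv_le_one_of_one_le₀ (le_add_of_nonneg_right (by positivity))
    refine h.congr (ae_of_all _ fun u => ?_)
    simp [smul_smul, inv_mul_cancel₀ (one_add_div_sq_pos hb.le u).ne']
  have hrest : IntegrableOn (fun u => (b / u ^ 2) • g (u - b / u)) (Ioi 0) :=
    (hweighted.sub hplain).congr (ae_of_all _ fun u => by simp [add_smul])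
  have hsplit : ∫ u in Ioi 0, (1 + b / u ^ 2) • g (u - b / u) =
      (∫ u in Ioi 0, g (u - b / u)) + ∫ u in Ioi 0, (b / u ^ 2) • g (u - b / u) := by
    rw [← integral_add hplain hrest]
    simp only [add_smul, one_smul]
  -- `u ↦ b / u` swaps the two halves of the weight `1 + b / u ^ 2`, since `g` is even.
  have hswap : ∫ u in Ioi 0, (b / u ^ 2) • g (u - b / u) = ∫ u in Ioi 0, g (u - b / u) := by
    rw [← integral_Ioi_comp_div_pow hb one_ne_zero (fun u => g (u - b / u))]
    refine setIntegral_congr_fun measurableSet_Ioi fun u _ => ?_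
    simp only [Nat.cast_one, one_mul, pow_one, div_div_cancel₀ hb.ne']
    rw [← neg_sub, heven]
  rw [← integral_Ioi_comp_sub_div hb, hsplit, hswap, ← two_smul ℝ, smul_smul,
    inv_mul_cancel₀ two_ne_zero, one_smul]

end ChangeOfVariables

theorem integral_Ioi_exp_neg_sq_sub_div {b : ℝ} (hb : 0 ≤ b) :
    ∫ u in Ioi 0, exp (-(u - b / u) ^ 2) = √π / 2 := by
  rcases hb.eq_or_lt with rfl | hb
  · simpa using integral_gaussian_Ioi 1
  · rw [integral_Ioi_comp_sub_div_of_even hb (g := fun t => exp (-t ^ 2))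
      (by simpa using integrable_exp_neg_mul_sq one_pos) (by simp)]
    simpa [div_eq_inv_mul] using integral_gaussian 1

theorem integral_Ioi_exp_neg_sq_add_sq_div_sq {b : ℝ} (hb : 0 ≤ b) :
    ∫ u in Ioi 0, exp (-(u ^ 2 + b ^ 2 / u ^ 2)) = √π / 2 * exp (-(2 * b)) := by
  have hsq : ∀ u ∈ Ioi (0 : ℝ), exp (-(u ^ 2 + b ^ 2 / u ^ 2)) =
      exp (-(2 * b)) * exp (-(u - b / u) ^ 2) := fun u (hu : 0 < u) => by
    rw [← exp_add]
    congr 1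
    field_simp
    ring
  rw [setIntegral_congr_fun measurableSet_Ioi hsq, integral_const_mul,
    integral_Ioi_exp_neg_sq_sub_div hb, mul_comm]

theorem levyDensity_div_sq {α u : ℝ} (hα : 0 < α) (hu : 0 < u) :
    levyDensity α (α ^ 2 / 4 / u ^ 2) = 4 * u ^ 3 / (√π * α ^ 2) * exp (-u ^ 2) := by
  rw [levyDensity, if_pos (by positivity)]
  have hsqrt : √(π * (α ^ 2 / 4 / u ^ 2) ^ 3) = α ^ 3 / (8 * u ^ 3) * √π := by
    rw [show π * (α ^ 2 / 4 / u ^ 2) ^ 3 = (α ^ 3 / (8 * u ^ 3)) ^ 2 * π by ring,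
      sqrt_mul (by positivity), sqrt_sq (by positivity)]
  have hexponent : -α ^ 2 / (4 * (α ^ 2 / 4 / u ^ 2)) = -u ^ 2 := by
    field_simp
  rw [hsqrt, hexponent]
  field_simp
  ring

/-- the Laplace transform of the Lévy density is `exp (-α √s)`. -/
theorem levyDensity_laplaceTransform (α : ℝ) (hα : 0 < α) (s : ℝ) (hs : 0 ≤ s) :
    ∫ x in Set.Ioi (0 : ℝ), Real.exp (-s * x) * levyDensity α x =
      Real.exp (-α * Real.sqrt s) := by
  have hintegrand : ∀ u ∈ Ioi (0 : ℝ),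
      ((2 : ℕ) * (α ^ 2 / 4) / u ^ (2 + 1)) •
          (exp (-s * (α ^ 2 / 4 / u ^ 2)) * levyDensity α (α ^ 2 / 4 / u ^ 2)) =
        2 / √π * exp (-(u ^ 2 + (α * √s / 2) ^ 2 / u ^ 2)) := fun u (hu : 0 < u) => by
    have hexponent : -s * (α ^ 2 / 4 / u ^ 2) = -((α * √s / 2) ^ 2 / u ^ 2) := by
      rw [div_pow, mul_pow, sq_sqrt hs]
      ring
    rw [levyDensity_div_sq hα hu, smul_eq_mul, hexponent, neg_add, exp_add]
    field_simp
    ring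
  rw [← integral_Ioi_comp_div_pow (by positivity : (0 : ℝ) < α ^ 2 / 4) two_ne_zero,
    setIntegral_congr_fun measurableSet_Ioi hintegrand, integral_const_mul,
    integral_Ioi_exp_neg_sq_add_sq_div_sq (by positivity)]
  field_simp
end

section
/- For α, β > 0, the Laplace convolution of the Lévy densities f_α and f_β is the Lévy density f_{α+β}: for all x > 0, ∫₀^x f_α(u) f_β(x−u) du = f_{α+β}(x). -/
/-!
Write `E(t) = ∫₀ᵗ e^{-s²} ds` and, for `0 < u < x`,
`g_γ(u) = ((α + γ) u - α x) / (2 √(x u (x - u)))`. Since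
`g_γ(u)² = α²/(4u) + γ²/(4(x-u)) - (α+γ)²/(4x)`, the function `h_γ = e^{-(α+γ)²/(4x)} E ∘ g_γ`
has derivative `e^{-α²/(4u)} e^{-γ²/(4(x-u))} x² (α(x-u) + γu) / (4 (x u (x-u))^{3/2})`.
Because `(α+β)(α(x-u) + βu) + (β-α)(α(x-u) - βu) = 2αβx`, the function
`((α+β) h_β + (β-α) h_{-β}) / (2π x^{3/2})` is a primitive of `u ↦ f_α(u) f_β(x-u)` on `(0, x)`.
At both ends `g_{-β} → -∞`, while `g_β` runs from `-∞` to `+∞`; so the integral is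
`(α+β) e^{-(α+β)²/(4x)} √π / (2π x^{3/2}) = f_{α+β}(x)`.
-/

open MeasureTheory Real

open Filter Set Topology intervalIntegral

lemma sqrt_pow_of_nonneg {y : ℝ} (hy : 0 ≤ y) (n : ℕ) : √(y ^ n) = √y ^ n := by
  conv_lhs => rw [← sq_sqrt hy, ← pow_mul, mul_comm, pow_mul]
  exact sqrt_sq (pow_nonneg (sqrt_nonneg y) n)

noncomputable def gaussPrimitive (t : ℝ) : ℝ := ∫ s in (0 : ℝ)..t, exp (-s ^ 2)

lemma hasDerivAt_gaussPrimitive (t : ℝ) : HasDerivAt gaussPrimitive (exp (-t ^ 2)) t :=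
  ((by fun_prop : Continuous fun s : ℝ => exp (-s ^ 2)).integral_hasStrictDerivAt 0 t).hasDerivAt

lemma gaussPrimitive_neg (t : ℝ) : gaussPrimitive (-t) = -gaussPrimitive t := by
  have h := integral_comp_neg (a := 0) (b := t) fun s => exp (-s ^ 2)
  simp only [neg_sq, neg_zero] at h
  rw [gaussPrimitive, gaussPrimitive, integral_symm, ← h]

lemma tendsto_gaussPrimitive_atTop : Tendsto gaussPrimitive atTop (𝓝 (√π / 2)) := by
  have hint : Integrable fun s : ℝ => exp (-s ^ 2) := by
    simpa using integrable_exp_neg_mul_sq one_pos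
  have hval : ∫ s in Ioi 0, exp (-s ^ 2) = √π / 2 := by simpa using integral_gaussian_Ioi 1
  exact hval ▸ intervalIntegral_tendsto_integral_Ioi 0 hint.integrableOn tendsto_id

lemma tendsto_gaussPrimitive_atBot : Tendsto gaussPrimitive atBot (𝓝 (-(√π / 2))) := by
  have := tendsto_gaussPrimitive_atTop.neg.comp tendsto_neg_atBot_atTop
  simpa [Function.comp_def, gaussPrimitive_neg] using this

lemma levyDensity_eq_inv_rpow_mul_exp (α : ℝ) {x : ℝ} (hx : 0 < x) :
    levyDensity α x = α / (2 * √π) * (x⁻¹ ^ (3 / 2 : ℝ) * exp (-(α ^ 2 / 4) * x⁻¹)) := by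
  have hx3 : √(x ^ 3) = x ^ (3 / 2 : ℝ) := by
    rw [sqrt_eq_rpow, ← rpow_natCast, ← rpow_mul hx.le]; norm_num
  rw [levyDensity, if_pos hx, sqrt_mul pi_pos.le, hx3, inv_rpow hx.le]
  field_simp

lemma tendsto_levyDensity_nhdsGT_zero (α : ℝ) : Tendsto (levyDensity α) (𝓝[>] 0) (𝓝 0) := by
  rcases eq_or_ne α 0 with rfl | hα
  · have : levyDensity 0 = 0 := funext fun x => by simp [levyDensity]
    exact this ▸ tendsto_const_nhds
  have h := ((tendsto_rpow_mul_exp_neg_mul_atTop_nhds_zero (3 / 2) (α ^ 2 / 4)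
    (by positivity)).comp tendsto_inv_nhdsGT_zero).const_mul (α / (2 * √π))
  rw [mul_zero] at h
  exact h.congr' (eventually_mem_nhdsWithin.mono fun x hx =>
    (levyDensity_eq_inv_rpow_mul_exp α hx).symm)

lemma continuous_levyDensity (α : ℝ) : Continuous (levyDensity α) := by
  refine continuous_iff_continuousAt.2 fun x => ?_
  rcases lt_trichotomy x 0 with hx | rfl | hx
  · exact continuousAt_const.congr <| (eventually_lt_nhds hx).mono fun y hy =>
      (if_neg hy.not_gt).symm
  · refine continuousAt_iff_continuous_left_right.2 ⟨?_, ?_⟩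
    · exact continuousWithinAt_const.congr (fun y hy => if_neg (not_lt.2 hy))
        (if_neg (lt_irrefl 0))
    · refine continuousWithinAt_Ioi_iff_Ici.1 ?_
      simpa [ContinuousWithinAt, levyDensity] using tendsto_levyDensity_nhdsGT_zero α
  · have : ContinuousAt (fun y => α / (2 * √(π * y ^ 3)) * exp (-α ^ 2 / (4 * y))) x := by
      have : 0 < √(π * x ^ 3) := by positivity
      fun_prop (disch := positivity)
    exact this.congr <| (eventually_gt_nhds hx).mono fun y hy => (if_pos hy).symm

noncomputable def levyConvArg (α γ x u : ℝ) : ℝ :=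
  ((α + γ) * u - α * x) / (2 * √(x * u * (x - u)))

noncomputable def levyConvTerm (α γ x u : ℝ) : ℝ :=
  exp (-(α + γ) ^ 2 / (4 * x)) * gaussPrimitive (levyConvArg α γ x u)

noncomputable def levyConvPrimitive (α β x u : ℝ) : ℝ :=
  ((α + β) * levyConvTerm α β x u + (β - α) * levyConvTerm α (-β) x u) / (2 * π * √(x ^ 3))

section
variable {α β γ x u : ℝ}

lemma levyConvArg_sq (hu : u ∈ Ioo 0 x) :
    levyConvArg α γ x u ^ 2 =
      α ^ 2 / (4 * u) + γ ^ 2 / (4 * (x - u)) - (α + γ) ^ 2 / (4 * x) := by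
  obtain ⟨hu0, hux⟩ := hu
  have hxu : 0 < x - u := sub_pos.2 hux
  have hx : 0 < x := hu0.trans hux
  rw [levyConvArg, div_pow, mul_pow, sq_sqrt (by positivity)]
  field_simp
  ring

lemma hasDerivAt_levyConvArg (hu : u ∈ Ioo 0 x) :
    HasDerivAt (levyConvArg α γ x)
      (x ^ 2 * (α * (x - u) + γ * u) / (4 * √(x * u * (x - u)) ^ 3)) u := by
  obtain ⟨hu0, hux⟩ := hu
  have hq : 0 < x * u * (x - u) := by
    have := sub_pos.2 hux; have := hu0.trans hux; positivity
  have hqd : HasDerivAt (fun u => x * u * (x - u)) (x * (x - 2 * u)) u :=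
    (((hasDerivAt_id' u).const_mul x).mul ((hasDerivAt_id' u).const_sub x)).congr_deriv
      (by ring)
  have hNd : HasDerivAt (fun u => (α + γ) * u - α * x) (α + γ) u := by
    simpa using ((hasDerivAt_id u).const_mul (α + γ)).sub_const (α * x)
  refine (hNd.div ((hqd.sqrt hq.ne').const_mul 2) (by positivity)).congr_deriv ?_
  field_simp
  linear_combination (8 * (α + γ)) * sq_sqrt hq.le

lemma tendsto_levyConvRadicand {a : ℝ} (ha : a = 0 ∨ a = x) :
    Tendsto (fun u => x * u * (x - u)) (𝓝[Ioo 0 x] a) (𝓝[>] 0) := by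
  refine tendsto_nhdsWithin_iff.2 ⟨?_, eventually_mem_nhdsWithin.mono fun u hu => ?_⟩
  · refine ((by fun_prop : Continuous fun u => x * u * (x - u)).tendsto' a 0 ?_).mono_left
      nhdsWithin_le_nhds
    rcases ha with rfl | rfl <;> ring
  · exact mul_pos (mul_pos (hu.1.trans hu.2) hu.1) (sub_pos.2 hu.2)

lemma tendsto_inv_levyConvDenom {a : ℝ} (ha : a = 0 ∨ a = x) :
    Tendsto (fun u => (2 * √(x * u * (x - u)))⁻¹) (𝓝[Ioo 0 x] a) atTop := by
  have hq := tendsto_levyConvRadicand ha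
  refine Tendsto.inv_tendsto_nhdsGT_zero (tendsto_nhdsWithin_iff.2 ⟨?_, ?_⟩)
  · simpa using ((continuous_sqrt.tendsto 0).comp (hq.mono_right nhdsWithin_le_nhds)).const_mul 2
  · exact (hq.eventually self_mem_nhdsWithin).mono fun u hu => mul_pos two_pos (sqrt_pos.2 hu)

lemma tendsto_levyConvArg_numer (a : ℝ) :
    Tendsto (fun u => (α + γ) * u - α * x) (𝓝[Ioo 0 x] a) (𝓝 ((α + γ) * a - α * x)) :=
  ((by fun_prop : Continuous fun u => (α + γ) * u - α * x).tendsto a).mono_left nhdsWithin_le_nhds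

lemma tendsto_levyConvArg_atBot {a : ℝ} (ha : a = 0 ∨ a = x) (hneg : (α + γ) * a - α * x < 0) :
    Tendsto (levyConvArg α γ x) (𝓝[Ioo 0 x] a) atBot :=
  (tendsto_levyConvArg_numer a).neg_mul_atTop hneg (tendsto_inv_levyConvDenom ha)

lemma tendsto_levyConvArg_atTop {a : ℝ} (ha : a = 0 ∨ a = x) (hpos : 0 < (α + γ) * a - α * x) :
    Tendsto (levyConvArg α γ x) (𝓝[Ioo 0 x] a) atTop :=
  (tendsto_levyConvArg_numer a).pos_mul_atTop hpos (tendsto_inv_levyConvDenom ha)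

lemma tendsto_levyConvTerm_nhdsGT_zero (hα : 0 < α) (hx : 0 < x) :
    Tendsto (levyConvTerm α γ x) (𝓝[>] 0) (𝓝 (exp (-(α + γ) ^ 2 / (4 * x)) * -(√π / 2))) := by
  rw [← nhdsWithin_Ioo_eq_nhdsGT hx]
  exact (tendsto_gaussPrimitive_atBot.comp
    (tendsto_levyConvArg_atBot (.inl rfl) (by nlinarith))).const_mul _

lemma tendsto_levyConvTerm_nhdsLT_of_pos (hγ : 0 < γ) (hx : 0 < x) :
    Tendsto (levyConvTerm α γ x) (𝓝[<] x) (𝓝 (exp (-(α + γ) ^ 2 / (4 * x)) * (√π / 2))) := by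
  rw [← nhdsWithin_Ioo_eq_nhdsLT hx]
  exact (tendsto_gaussPrimitive_atTop.comp
    (tendsto_levyConvArg_atTop (.inr rfl) (by nlinarith))).const_mul _

lemma tendsto_levyConvTerm_nhdsLT_of_neg (hγ : γ < 0) (hx : 0 < x) :
    Tendsto (levyConvTerm α γ x) (𝓝[<] x) (𝓝 (exp (-(α + γ) ^ 2 / (4 * x)) * -(√π / 2))) := by
  rw [← nhdsWithin_Ioo_eq_nhdsLT hx]
  exact (tendsto_gaussPrimitive_atBot.comp
    (tendsto_levyConvArg_atBot (.inr rfl) (by nlinarith))).const_mul _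

lemma hasDerivAt_levyConvTerm (hu : u ∈ Ioo 0 x) :
    HasDerivAt (levyConvTerm α γ x)
      (exp (-α ^ 2 / (4 * u)) * exp (-γ ^ 2 / (4 * (x - u))) *
        (x ^ 2 * (α * (x - u) + γ * u) / (4 * √(x * u * (x - u)) ^ 3))) u := by
  refine (((hasDerivAt_gaussPrimitive _).comp u (hasDerivAt_levyConvArg hu)).const_mul
    _).congr_deriv ?_
  rw [← mul_assoc, ← exp_add, ← exp_add, levyConvArg_sq hu]
  ring_nf

lemma hasDerivAt_levyConvPrimitive (hu : u ∈ Ioo 0 x) :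
    HasDerivAt (levyConvPrimitive α β x) (levyDensity α u * levyDensity β (x - u)) u := by
  have hu0 := hu.1
  have hxu : 0 < x - u := sub_pos.2 hu.2
  have hx := hu.1.trans hu.2
  refine ((((hasDerivAt_levyConvTerm hu).const_mul (α + β)).add
    ((hasDerivAt_levyConvTerm hu).const_mul (β - α))).div_const _).congr_deriv ?_
  rw [levyDensity, levyDensity, if_pos hu0, if_pos hxu, neg_sq, sqrt_mul pi_pos.le,
    sqrt_mul pi_pos.le, sqrt_mul (by positivity), sqrt_mul hx.le, sqrt_pow_of_nonneg hx.le,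
    sqrt_pow_of_nonneg hu0.le, sqrt_pow_of_nonneg hxu.le]
  have hrel : √x ^ 2 = √u ^ 2 + √(x - u) ^ 2 := by
    rw [sq_sqrt hx.le, sq_sqrt hu0.le, sq_sqrt hxu.le]; ring
  have : 0 < √π := by positivity
  have : 0 < √x := by positivity
  have : 0 < √u := by positivity
  have : 0 < √(x - u) := by positivity
  have hp : π = √π ^ 2 := (sq_sqrt pi_pos.le).symm
  have hxa : x = √x ^ 2 := (sq_sqrt hx.le).symm
  have hub : u = √u ^ 2 := (sq_sqrt hu0.le).symm
  have hxud : x - u = √(x - u) ^ 2 := (sq_sqrt hxu.le).symm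
  generalize √π = p at *
  generalize √(x - u) = d at *
  generalize √x = a at *
  generalize √u = b at *
  set A := exp (-α ^ 2 / (4 * u))
  set B := exp (-β ^ 2 / (4 * (x - u)))
  rw [hxud, hxa, hub, hp]
  field_simp
  linear_combination (-4 * α * β * A * B) * hrel

end

/-- the Laplace convolution of the Lévy densities `f_α` and `f_β` is the
Lévy density `f_{α+β}`. -/
theorem levyDensity_laplaceConv (α β : ℝ) (hα : 0 < α) (hβ : 0 < β) (x : ℝ) (hx : 0 < x) :
    ∫ u in (0 : ℝ)..x, levyDensity α u * levyDensity β (x - u) =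
      levyDensity (α + β) x := by
  have hint : IntervalIntegrable (fun u => levyDensity α u * levyDensity β (x - u)) volume 0 x :=
    ((continuous_levyDensity α).mul ((continuous_levyDensity β).comp
      (continuous_sub_left x))).intervalIntegrable 0 x
  have hlim₀ := (((tendsto_levyConvTerm_nhdsGT_zero (γ := β) hα hx).const_mul (α + β)).add
    ((tendsto_levyConvTerm_nhdsGT_zero (γ := -β) hα hx).const_mul (β - α))).div_const
    (2 * π * √(x ^ 3))
  have hlimx := (((tendsto_levyConvTerm_nhdsLT_of_pos (α := α) hβ hx).const_mul (α + β)).add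
    ((tendsto_levyConvTerm_nhdsLT_of_neg (α := α) (neg_lt_zero.2 hβ) hx).const_mul
    (β - α))).div_const (2 * π * √(x ^ 3))
  rw [integral_eq_sub_of_hasDerivAt_of_tendsto hx (fun u hu => hasDerivAt_levyConvPrimitive hu)
    hint hlim₀ hlimx, levyDensity, if_pos hx, sqrt_mul pi_pos.le]
  have : 0 < √π := by positivity
  have : 0 < √(x ^ 3) := by positivity
  field_simp
  rw [sq_sqrt pi_pos.le]
  ring
end

section
/- For α, β > 0 and every p with 0 < p < 1, the integral identity ∫₀^∞ z · f_α(z p) · f_β(z (1−p)) dz = (1 / (π √(p(1−p)))) · (αβ / (α² (1−p) + β² p)) holds, where f_α and f_β are Lévy densities. -/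
open MeasureTheory Real

/-!
For `z > 0` the two Lévy factors multiply to `K e^{-c/z} / z³` with
`c = (α²(1-p) + β²p) / (4p(1-p))`, so the integrand is `K e^{-c/z} / z²`. The substitution
`u = 1/z` turns `∫₀^∞ e^{-c/z} z⁻² dz` into `∫₀^∞ e^{-cu} du = 1/c`.
-/

theorem integral_exp_neg_div_div_sq_Ioi {c : ℝ} (hc : 0 < c) :
    ∫ z in Set.Ioi (0 : ℝ), exp (-c / z) / z ^ 2 = 1 / c := by
  have hsubst := integral_comp_rpow_Ioi (fun u => exp (-c * u)) (p := -1) (by norm_num)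
  rw [integral_exp_mul_Ioi (neg_neg_iff_pos.mpr hc)] at hsubst
  simp only [mul_zero, exp_zero, neg_div_neg_eq] at hsubst
  rw [← hsubst]
  refine setIntegral_congr_fun measurableSet_Ioi fun z hz => ?_
  have hz : 0 < z := hz
  norm_num [rpow_neg hz.le, rpow_natCast, div_eq_mul_inv, mul_comm]

theorem levyDensity_of_pos (α : ℝ) {x : ℝ} (hx : 0 < x) :
    levyDensity α x = α / (2 * √(π * x ^ 3)) * exp (-α ^ 2 / (4 * x)) :=
  if_pos hx

theorem mul_levyDensity_mul_levyDensity (α β : ℝ) {p q z : ℝ} (hp : 0 < p) (hq : 0 < q)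
    (hz : 0 < z) :
    z * levyDensity α (z * p) * levyDensity β (z * q) =
      α * β / (4 * π * (p * q) * √(p * q)) *
        (exp (-((α ^ 2 * q + β ^ 2 * p) / (4 * (p * q))) / z) / z ^ 2) := by
  rw [levyDensity_of_pos α (by positivity), levyDensity_of_pos β (by positivity)]
  have hsqrt : √(π * (z * p) ^ 3) * √(π * (z * q) ^ 3) = π * z ^ 3 * (p * q) * √(p * q) := by
    rw [← sqrt_mul (by positivity), ← sqrt_sq (by positivity : 0 ≤ π * z ^ 3 * (p * q)),
      ← sqrt_mul (sq_nonneg _)]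
    ring_nf
  have hexp : exp (-α ^ 2 / (4 * (z * p))) * exp (-β ^ 2 / (4 * (z * q))) =
      exp (-((α ^ 2 * q + β ^ 2 * p) / (4 * (p * q))) / z) := by
    rw [← exp_add]
    congr 1
    field_simp
    ring
  calc z * (α / (2 * √(π * (z * p) ^ 3)) * exp (-α ^ 2 / (4 * (z * p)))) *
        (β / (2 * √(π * (z * q) ^ 3)) * exp (-β ^ 2 / (4 * (z * q))))
      = α * β * z / (4 * (√(π * (z * p) ^ 3) * √(π * (z * q) ^ 3))) *
          (exp (-α ^ 2 / (4 * (z * p))) * exp (-β ^ 2 / (4 * (z * q)))) := by ring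
    _ = _ := by
      rw [hsqrt, hexp]
      field_simp

theorem integral_mul_levyDensity_mul_levyDensity {α β p q : ℝ} (hα : 0 < α) (hβ : 0 < β)
    (hp : 0 < p) (hq : 0 < q) :
    ∫ z in Set.Ioi (0 : ℝ), z * levyDensity α (z * p) * levyDensity β (z * q) =
      1 / (π * √(p * q)) * (α * β / (α ^ 2 * q + β ^ 2 * p)) := by
  rw [setIntegral_congr_fun measurableSet_Ioi
      fun z hz => mul_levyDensity_mul_levyDensity α β hp hq hz,
    integral_const_mul, integral_exp_neg_div_div_sq_Ioi (by positivity)]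
  have : 0 < √(p * q) := by positivity
  field_simp

/-- for Lévy densities,
`∫₀^∞ z f_α(z p) f_β(z (1-p)) dz = (1/(π √(p(1-p)))) · (αβ / (α²(1-p) + β²p))`. -/
theorem levyDensity_ratio_integral (α β : ℝ) (hα : 0 < α) (hβ : 0 < β)
    (p : ℝ) (hp₀ : 0 < p) (hp₁ : p < 1) :
    ∫ z in Set.Ioi (0 : ℝ), z * levyDensity α (z * p) * levyDensity β (z * (1 - p)) =
      1 / (Real.pi * Real.sqrt (p * (1 - p))) *
        (α * β / (α ^ 2 * (1 - p) + β ^ 2 * p)) :=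
  integral_mul_levyDensity_mul_levyDensity hα hβ hp₀ (sub_pos.mpr hp₁)
end
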